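/- arXiv:2010.00280 — 4 statements merged into one kernel-verified Lean document; each statement's English description precedes it below -/
import Mathlib

section
/- No finite dimensional Banach space of dimension at least 2 has the Bishop–Phelps–Bollobás operator property for numerical radius (BPBop-nu). -/
noncomputable section

open Filter Topology

variable (𝕜 : Type*) [RCLike 𝕜] (X : Type*) [NormedAddCommGroup X] [NormedSpace 𝕜 X]

/-- `(x, f)` is a state of `X`: `x ∈ S_X`, `f ∈ S_{X*}`, `f x = 1`. -/
def IsState (x : X) (f : X →L[𝕜] 𝕜) : Prop :=
  ‖x‖ = 1 ∧ ‖f‖ = 1 ∧ f x = 1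

/-- The numerical radius `v(T) = sup {|f (T x)| : (x, f) ∈ Π(X)}`. -/
def nrad (T : X →L[𝕜] X) : ℝ :=
  sSup {r : ℝ | ∃ x f, IsState 𝕜 X x f ∧ r = ‖f (T x)‖}

/-- The numerical index `n(X) = inf {v(T) : ‖T‖ = 1}`. -/
def nindex : ℝ :=
  sInf {r : ℝ | ∃ T : X →L[𝕜] X, ‖T‖ = 1 ∧ r = nrad 𝕜 X T}

/-- The Bishop–Phelps–Bollobás operator property for numerical radius. -/
def BPBopNu : Prop :=
  ∀ ε : ℝ, 0 < ε → ∃ η : ℝ, 0 < η ∧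
    ∀ (T : X →L[𝕜] X) (x : X) (f : X →L[𝕜] 𝕜),
      nrad 𝕜 X T = 1 → IsState 𝕜 X x f → 1 - η < ‖f (T x)‖ →
      ∃ (y : X) (g : X →L[𝕜] 𝕜), IsState 𝕜 X y g ∧ ‖g (T y)‖ = 1 ∧
        ‖y - x‖ < ε ∧ ‖g - f‖ < ε

/-!
For a state `(x₀, f₀)` and `0 < t ≤ 1`, the operator `T = (1 - t) Id + t (f₀ ⊗ x₀)` satisfies
`|g (T y)| ≤ 1 - t + t |f₀ y|` at every state `(y, g)`, with equality `1` at `(x₀, f₀)`. So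
`v(T) = 1`, and `T` attains its numerical radius only at states with `|f₀ y| = 1`. Since
`dim X ≥ 2`, `ker f₀` contains a unit vector `z`; any state `(z, g)` has `|g (T z)| = 1 - t`,
as close to `1` as we like, while every `y` with `|f₀ y| = 1` lies at distance `≥ 1` from `z`.
-/

section

variable {𝕜 X}

variable (𝕜) in
lemma exists_isState_of_norm_eq_one {x : X} (hx : ‖x‖ = 1) : ∃ f, IsState 𝕜 X x f := by
  obtain ⟨f, hf, hfx⟩ := exists_dual_vector 𝕜 x (by simp [hx])
  exact ⟨f, hx, hf, by simp [hfx, hx]⟩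

variable (𝕜 X) in
lemma exists_isState [Nontrivial X] : ∃ x f, IsState 𝕜 X x f := by
  obtain ⟨v, hv⟩ := exists_ne (0 : X)
  exact ⟨_, exists_isState_of_norm_eq_one 𝕜 (norm_smul_inv_norm (𝕜 := 𝕜) hv)⟩

lemma exists_norm_eq_one_apply_eq_zero (h : 2 ≤ Module.finrank 𝕜 X) (f : X →L[𝕜] 𝕜) :
    ∃ z : X, ‖z‖ = 1 ∧ f z = 0 := by
  have : FiniteDimensional 𝕜 X := Module.finite_of_finrank_pos (by omega)
  have hker : LinearMap.ker (f : X →ₗ[𝕜] 𝕜) ≠ ⊥ :=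
    LinearMap.ker_ne_bot_of_finrank_lt (by rw [Module.finrank_self]; omega)
  obtain ⟨v, hv, hv0⟩ := (Submodule.ne_bot_iff _).mp hker
  refine ⟨(‖v‖⁻¹ : 𝕜) • v, norm_smul_inv_norm hv0, ?_⟩
  simp only [map_smul, show f v = 0 from hv, smul_zero]

lemma nrad_eq_of_forall_le {T : X →L[𝕜] X} {c : ℝ}
    (hle : ∀ x f, IsState 𝕜 X x f → ‖f (T x)‖ ≤ c) {x₀ : X} {f₀ : X →L[𝕜] 𝕜}
    (h₀ : IsState 𝕜 X x₀ f₀) (hc : ‖f₀ (T x₀)‖ = c) : nrad 𝕜 X T = c :=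
  IsGreatest.csSup_eq ⟨⟨x₀, f₀, h₀, hc.symm⟩, by rintro _ ⟨x, f, hs, rfl⟩; exact hle x f hs⟩

def idRankOneCombination (t : ℝ) (x₀ : X) (f₀ : X →L[𝕜] 𝕜) : X →L[𝕜] X :=
  ((1 - t : ℝ) : 𝕜) • ContinuousLinearMap.id 𝕜 X + (t : 𝕜) • f₀.smulRight x₀

variable {t : ℝ} {x₀ : X} {f₀ : X →L[𝕜] 𝕜}

lemma apply_idRankOneCombination_apply (f : X →L[𝕜] 𝕜) (x : X) :
    f (idRankOneCombination t x₀ f₀ x) = ((1 - t : ℝ) : 𝕜) * f x + t * (f₀ x * f x₀) := by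
  simp [idRankOneCombination, mul_left_comm]

lemma IsState.norm_apply_idRankOneCombination_le (ht0 : 0 ≤ t) (ht1 : t ≤ 1) (hx₀ : ‖x₀‖ ≤ 1)
    {x : X} {f : X →L[𝕜] 𝕜} (hs : IsState 𝕜 X x f) :
    ‖f (idRankOneCombination t x₀ f₀ x)‖ ≤ 1 - t + t * ‖f₀ x‖ := by
  obtain ⟨-, hf, hfx⟩ := hs
  have hfx₀ : ‖f x₀‖ ≤ 1 := (f.unit_le_opNorm x₀ hx₀).trans_eq hf
  rw [apply_idRankOneCombination_apply, hfx, mul_one]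
  calc _ ≤ ‖((1 - t : ℝ) : 𝕜)‖ + ‖(t : 𝕜) * (f₀ x * f x₀)‖ := norm_add_le _ _
    _ = 1 - t + t * (‖f₀ x‖ * ‖f x₀‖) := by
        rw [norm_mul, norm_mul, RCLike.norm_ofReal, RCLike.norm_ofReal,
          abs_of_nonneg (sub_nonneg.2 ht1), abs_of_nonneg ht0]
    _ ≤ 1 - t + t * ‖f₀ x‖ := by
        gcongr
        exact mul_le_of_le_one_right (norm_nonneg _) hfx₀

lemma nrad_idRankOneCombination (ht0 : 0 ≤ t) (ht1 : t ≤ 1) (h₀ : IsState 𝕜 X x₀ f₀) :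
    nrad 𝕜 X (idRankOneCombination t x₀ f₀) = 1 := by
  refine nrad_eq_of_forall_le (fun x f hs => ?_) h₀ ?_
  · have hf₀x : ‖f₀ x‖ ≤ 1 := (f₀.unit_le_opNorm x hs.1.le).trans_eq h₀.2.1
    have := hs.norm_apply_idRankOneCombination_le ht0 ht1 h₀.1.le (f₀ := f₀)
    nlinarith
  · rw [apply_idRankOneCombination_apply, h₀.2.2]
    simp

lemma IsState.norm_apply_idRankOneCombination_of_apply_eq_zero (ht1 : t ≤ 1) {z : X}
    {g : X →L[𝕜] 𝕜} (hs : IsState 𝕜 X z g) (hz : f₀ z = 0) :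
    ‖g (idRankOneCombination t x₀ f₀ z)‖ = 1 - t := by
  rw [apply_idRankOneCombination_apply, hs.2.2, hz, zero_mul, mul_zero, add_zero, mul_one,
    RCLike.norm_ofReal, abs_of_nonneg (sub_nonneg.2 ht1)]

lemma IsState.one_le_norm_of_norm_apply_idRankOneCombination_eq_one (ht0 : 0 < t)
    (ht1 : t ≤ 1) (hx₀ : ‖x₀‖ ≤ 1) {y : X} {g : X →L[𝕜] 𝕜} (hs : IsState 𝕜 X y g)
    (hT : ‖g (idRankOneCombination t x₀ f₀ y)‖ = 1) : 1 ≤ ‖f₀ y‖ := by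
  have := hs.norm_apply_idRankOneCombination_le ht0.le ht1 hx₀ (f₀ := f₀)
  nlinarith

end

theorem stmt10 (h : 2 ≤ Module.finrank 𝕜 X) : ¬ BPBopNu 𝕜 X := by
  intro hbpb
  obtain ⟨η, hη, hattain⟩ := hbpb (1 / 2) one_half_pos
  have : Nontrivial X := Module.nontrivial_of_finrank_pos (R := 𝕜) (by omega)
  obtain ⟨x₀, f₀, h₀⟩ := exists_isState 𝕜 X
  obtain ⟨z, hz, hf₀z⟩ := exists_norm_eq_one_apply_eq_zero h f₀
  obtain ⟨g, hzg⟩ := exists_isState_of_norm_eq_one 𝕜 hz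
  set t := min (η / 2) 1
  have ht0 : 0 < t := lt_min (half_pos hη) one_pos
  have ht1 : t ≤ 1 := min_le_right _ _
  have htη : t < η := (min_le_left _ _).trans_lt (half_lt_self hη)
  obtain ⟨y, g', hyg', hTy, hyz, -⟩ :=
    hattain (idRankOneCombination t x₀ f₀) z g (nrad_idRankOneCombination ht0.le ht1 h₀) hzg
      (by rw [hzg.norm_apply_idRankOneCombination_of_apply_eq_zero ht1 hf₀z]; linarith)
  have hfar : 1 ≤ ‖f₀ y‖ :=
    hyg'.one_le_norm_of_norm_apply_idRankOneCombination_eq_one ht0 ht1 h₀.1.le hTy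
  have hnear : ‖f₀ y‖ < 1 / 2 :=
    calc ‖f₀ y‖ = ‖f₀ (y - z)‖ := by rw [map_sub, hf₀z, sub_zero]
      _ ≤ ‖y - z‖ := (f₀.le_of_opNorm_le h₀.2.1.le _).trans_eq (one_mul _)
      _ < 1 / 2 := hyz
  linarith
end
end

section
/- Every finite dimensional Banach space X with numerical index n(X) > 0 has the local point property L_{p,p}-nu: for every ε > 0 and every state (x,x*) ∈ Π(X) there is η > 0 such that whenever T ∈ L(X) with v(T) = 1 satisfies |x*(Tx)| > 1 − η, there exists S ∈ L(X) with v(S) = 1, |x*(Sx)| = 1, and ‖S − T‖ < ε. -/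
noncomputable section

open Filter Topology

variable (𝕜 : Type*) [RCLike 𝕜] (X : Type*) [NormedAddCommGroup X] [NormedSpace 𝕜 X]

/-!
`v` is `1`-Lipschitz for the operator norm and `n(X) ‖T‖ ≤ v(T)`, so `K = {T : v(T) = 1}` is
closed and bounded, hence compact since `L(X)` is finite dimensional. On `K` the continuous map
`T ↦ |x*(T x)|` is at most `1`; the operators of `K` at distance `≥ ε` from the set where it
equals `1` form a compact set on which its maximum is some `M < 1`, and `η = 1 - M` works.
-/

open Metric

theorem IsCompact.exists_pos_forall_sub_lt_imp_exists_eq_dist_lt {α : Type*}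
    [PseudoMetricSpace α] {K : Set α} (hK : IsCompact K) {g : α → ℝ} (hg : ContinuousOn g K)
    {c : ℝ} (hle : ∀ a ∈ K, g a ≤ c) {ε : ℝ} (hε : 0 < ε) :
    ∃ η > 0, ∀ a ∈ K, c - η < g a → ∃ b ∈ K, g b = c ∧ dist a b < ε := by
  set C := K \ thickening ε {b ∈ K | g b = c}
  have hnear : ∀ a ∈ K, a ∉ C → ∃ b ∈ K, g b = c ∧ dist a b < ε := fun a ha haC => by
    obtain ⟨b, ⟨hbK, hb⟩, hab⟩ := mem_thickening_iff.mp (by simpa [C, ha] using haC)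
    exact ⟨b, hbK, hb, hab⟩
  rcases C.eq_empty_or_nonempty with hC | hC
  · exact ⟨1, one_pos, fun a ha _ => hnear a ha (hC ▸ Set.notMem_empty a)⟩
  obtain ⟨a₀, ha₀, hmax⟩ :=
    (hK.diff isOpen_thickening).exists_isMaxOn hC (hg.mono Set.sdiff_subset)
  have hlt : g a₀ < c :=
    (hle a₀ ha₀.1).lt_of_ne fun heq => ha₀.2 (self_subset_thickening hε _ ⟨ha₀.1, heq⟩)
  refine ⟨c - g a₀, sub_pos.mpr hlt, fun a ha hga => hnear a ha fun haC => ?_⟩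
  have : g a ≤ g a₀ := hmax haC
  linarith

variable {𝕜 X}

theorem IsState.norm_apply_le {x : X} {f : X →L[𝕜] 𝕜} (hxf : IsState 𝕜 X x f)
    (T : X →L[𝕜] X) : ‖f (T x)‖ ≤ ‖T‖ :=
  calc ‖f (T x)‖ ≤ ‖f‖ * (‖T‖ * ‖x‖) := f.le_of_opNorm_le_of_le le_rfl (T.le_opNorm x)
    _ = ‖T‖ := by rw [hxf.1, hxf.2.1, one_mul, mul_one]

theorem nrad_bddAbove (T : X →L[𝕜] X) :
    BddAbove {r : ℝ | ∃ x f, IsState 𝕜 X x f ∧ r = ‖f (T x)‖} :=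
  ⟨‖T‖, by rintro r ⟨x, f, hxf, rfl⟩; exact hxf.norm_apply_le T⟩

theorem IsState.norm_apply_le_nrad {x : X} {f : X →L[𝕜] 𝕜} (hxf : IsState 𝕜 X x f)
    (T : X →L[𝕜] X) : ‖f (T x)‖ ≤ nrad 𝕜 X T :=
  le_csSup (nrad_bddAbove T) ⟨x, f, hxf, rfl⟩

theorem nrad_le {T : X →L[𝕜] X} {c : ℝ} (hc : 0 ≤ c)
    (h : ∀ x f, IsState 𝕜 X x f → ‖f (T x)‖ ≤ c) : nrad 𝕜 X T ≤ c :=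
  Real.sSup_le (by rintro r ⟨x, f, hxf, rfl⟩; exact h x f hxf) hc

theorem nrad_nonneg (T : X →L[𝕜] X) : 0 ≤ nrad 𝕜 X T :=
  Real.sSup_nonneg (by rintro r ⟨x, f, -, rfl⟩; exact norm_nonneg _)

theorem nrad_le_nrad_add_norm_sub (S T : X →L[𝕜] X) :
    nrad 𝕜 X S ≤ nrad 𝕜 X T + ‖S - T‖ := by
  refine nrad_le (add_nonneg (nrad_nonneg T) (norm_nonneg _)) fun y g hyg => ?_
  calc ‖g (S y)‖ = ‖g (T y) + g ((S - T) y)‖ := by simp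
    _ ≤ ‖g (T y)‖ + ‖g ((S - T) y)‖ := norm_add_le _ _
    _ ≤ nrad 𝕜 X T + ‖S - T‖ := add_le_add (hyg.norm_apply_le_nrad T) (hyg.norm_apply_le _)

theorem lipschitzWith_nrad : LipschitzWith 1 (nrad 𝕜 X) :=
  LipschitzWith.of_le_add fun S T => by
    simpa [dist_eq_norm] using nrad_le_nrad_add_norm_sub S T

theorem continuous_nrad : Continuous (nrad 𝕜 X) :=
  lipschitzWith_nrad.continuous

theorem nrad_smul_le (c : 𝕜) (T : X →L[𝕜] X) : nrad 𝕜 X (c • T) ≤ ‖c‖ * nrad 𝕜 X T := by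
  refine nrad_le (by have := nrad_nonneg T; positivity) fun y g hyg => ?_
  simpa using mul_le_mul_of_nonneg_left (hyg.norm_apply_le_nrad T) (norm_nonneg c)

theorem nindex_le_nrad {T : X →L[𝕜] X} (hT : ‖T‖ = 1) : nindex 𝕜 X ≤ nrad 𝕜 X T :=
  csInf_le ⟨0, by rintro r ⟨U, -, rfl⟩; exact nrad_nonneg U⟩ ⟨T, hT, rfl⟩

theorem nindex_mul_norm_le_nrad (T : X →L[𝕜] X) : nindex 𝕜 X * ‖T‖ ≤ nrad 𝕜 X T := by
  rcases eq_or_ne T 0 with rfl | hT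
  · simpa using nrad_nonneg (0 : X →L[𝕜] X)
  have hpos : 0 < ‖T‖ := norm_pos_iff.mpr hT
  have hunit : ‖((‖T‖⁻¹ : ℝ) : 𝕜) • T‖ = 1 := by
    rw [norm_smul, RCLike.norm_ofReal, abs_inv, abs_norm, inv_mul_cancel₀ hpos.ne']
  have := (nindex_le_nrad hunit).trans (nrad_smul_le _ T)
  rw [RCLike.norm_ofReal, abs_inv, abs_norm] at this
  rwa [le_inv_mul_iff₀ hpos, mul_comm] at this

theorem isCompact_setOf_nrad_eq [FiniteDimensional 𝕜 X] (h : 0 < nindex 𝕜 X) (c : ℝ) :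
    IsCompact {T : X →L[𝕜] X | nrad 𝕜 X T = c} := by
  have : ProperSpace (X →L[𝕜] X) := FiniteDimensional.proper 𝕜 _
  refine isCompact_of_isClosed_isBounded (isClosed_eq continuous_nrad continuous_const) ?_
  refine isBounded_iff_forall_norm_le.mpr ⟨c / nindex 𝕜 X, fun T (hT : nrad 𝕜 X T = c) => ?_⟩
  rw [le_div_iff₀' h, ← hT]
  exact nindex_mul_norm_le_nrad T

theorem stmt11_general [FiniteDimensional 𝕜 X] (h : 0 < nindex 𝕜 X) :
    ∀ ε : ℝ, 0 < ε → ∀ (x : X) (f : X →L[𝕜] 𝕜), IsState 𝕜 X x f →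
      ∃ η : ℝ, 0 < η ∧ ∀ T : X →L[𝕜] X, nrad 𝕜 X T = 1 → 1 - η < ‖f (T x)‖ →
        ∃ S : X →L[𝕜] X, nrad 𝕜 X S = 1 ∧ ‖f (S x)‖ = 1 ∧ ‖S - T‖ < ε := by
  intro ε hε x f hxf
  have hcont : Continuous fun T : X →L[𝕜] X => ‖f (T x)‖ := by fun_prop
  obtain ⟨η, hη, hnear⟩ :=
    (isCompact_setOf_nrad_eq h 1).exists_pos_forall_sub_lt_imp_exists_eq_dist_lt
      hcont.continuousOn (fun T (hT : nrad 𝕜 X T = 1) => hT ▸ hxf.norm_apply_le_nrad T) hε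
  refine ⟨η, hη, fun T hT hTx => ?_⟩
  obtain ⟨S, hS, hSx, hST⟩ := hnear T hT hTx
  exact ⟨S, hS, hSx, by rwa [dist_comm, dist_eq_norm] at hST⟩

/-- every finite dimensional Banach space with `n(X) > 0` has the local
point property L_{p,p}-nu. -/
theorem stmt11 [CompleteSpace X] [FiniteDimensional 𝕜 X] (h : 0 < nindex 𝕜 X) :
    ∀ ε : ℝ, 0 < ε → ∀ (x : X) (f : X →L[𝕜] 𝕜), IsState 𝕜 X x f →
      ∃ η : ℝ, 0 < η ∧ ∀ T : X →L[𝕜] X, nrad 𝕜 X T = 1 → 1 - η < ‖f (T x)‖ →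
        ∃ S : X →L[𝕜] X, nrad 𝕜 X S = 1 ∧ ‖f (S x)‖ = 1 ∧ ‖S - T‖ < ε :=
  stmt11_general h
end
end

section
/- A reflexive Banach space X has the local point property L_{p,p}-nu if and only if its dual X* has L_{p,p}-nu. -/
noncomputable section

open Filter Topology

variable (𝕜 : Type*) [RCLike 𝕜] (X : Type*) [NormedAddCommGroup X] [NormedSpace 𝕜 X]

/-- The local point property L_{p,p}-nu. -/
def LppNu : Prop :=
  ∀ ε : ℝ, 0 < ε → ∀ (x : X) (f : X →L[𝕜] 𝕜), IsState 𝕜 X x f →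
    ∃ η : ℝ, 0 < η ∧ ∀ T : X →L[𝕜] X, nrad 𝕜 X T = 1 → 1 - η < ‖f (T x)‖ →
      ∃ S : X →L[𝕜] X, nrad 𝕜 X S = 1 ∧ ‖f (S x)‖ = 1 ∧ ‖S - T‖ < ε

/-! For reflexive `X`, dualization `T ↦ T*` is a surjective linear isometry `L(X) → L(X*)`, and
`(x, f) ↦ (f, x̂)` is a bijection `Π(X) → Π(X*)` with `x̂ (T* f) = f (T x)`. Hence dualization
preserves numerical radii, the values `|f (T x)|` at states and distances between operators, which
are all the data entering `L_{p,p}-nu`, so the property passes from `X` to `X*` and back. -/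

open NormedSpace

namespace ContinuousLinearMap

variable {𝕜} {E F : Type*} [NormedAddCommGroup E] [NormedSpace 𝕜 E]
  [NormedAddCommGroup F] [NormedSpace 𝕜 F]

/-- The Banach-space adjoint `T ↦ T*`; it is isometric by Hahn–Banach. -/
def dualMapₗᵢ : (E →L[𝕜] F) →ₗᵢ[𝕜] (StrongDual 𝕜 F →L[𝕜] StrongDual 𝕜 E) where
  toLinearMap := ((compL 𝕜 E F 𝕜).flip : (E →L[𝕜] F) →L[𝕜] _).toLinearMap
  norm_map' T := by
    change ‖(compL 𝕜 E F 𝕜).flip T‖ = ‖T‖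
    refine le_antisymm (opNorm_le_bound ((compL 𝕜 E F 𝕜).flip T) (norm_nonneg T) fun g => ?_)
      (opNorm_le_bound T (norm_nonneg ((compL 𝕜 E F 𝕜).flip T)) fun x => ?_)
    · simpa [mul_comm] using g.opNorm_comp_le T
    · refine norm_le_dual_bound 𝕜 (T x) (by positivity) fun g => ?_
      calc ‖g (T x)‖ = ‖(g.comp T) x‖ := rfl
        _ ≤ ‖g.comp T‖ * ‖x‖ := le_opNorm _ x
        _ ≤ ‖(compL 𝕜 E F 𝕜).flip T‖ * ‖g‖ * ‖x‖ := by
          gcongr; exact le_opNorm ((compL 𝕜 E F 𝕜).flip T) g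
        _ = _ := by ring

theorem dualMapₗᵢ_surjective (hF : Function.Surjective ⇑(inclusionInDoubleDual 𝕜 F)) :
    Function.Surjective (dualMapₗᵢ : (E →L[𝕜] F) →ₗᵢ[𝕜] _) := by
  intro T'
  let J : F ≃ₗᵢ[𝕜] StrongDual 𝕜 (StrongDual 𝕜 F) :=
    LinearIsometryEquiv.ofSurjective (inclusionInDoubleDualLi 𝕜) hF
  refine ⟨(J.symm : _ →L[𝕜] F).comp ((dualMapₗᵢ T').comp (inclusionInDoubleDual 𝕜 E)), ?_⟩
  ext g x
  -- `g (J⁻¹ Φ) = Φ g` for every `Φ ∈ F**`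
  exact congrArg (· g) (J.apply_symm_apply (dualMapₗᵢ T' (inclusionInDoubleDual 𝕜 E x)))

def dualMapEquiv (hF : Function.Surjective ⇑(inclusionInDoubleDual 𝕜 F)) :
    (E →L[𝕜] F) ≃ₗᵢ[𝕜] (StrongDual 𝕜 F →L[𝕜] StrongDual 𝕜 E) :=
  .ofSurjective dualMapₗᵢ (dualMapₗᵢ_surjective hF)

@[simp]
theorem dualMapEquiv_apply_apply (hF : Function.Surjective ⇑(inclusionInDoubleDual 𝕜 F))
    (T : E →L[𝕜] F) (g : StrongDual 𝕜 F) (x : E) : dualMapEquiv hF T g x = g (T x) :=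
  rfl

end ContinuousLinearMap

section Transfer

variable {𝕜 X} {Y : Type*} [NormedAddCommGroup Y] [NormedSpace 𝕜 Y]

def PairsStates (D : (X →L[𝕜] X) → (Y →L[𝕜] Y)) : Prop :=
  ∀ x f, IsState 𝕜 X x f → ∃ y g, IsState 𝕜 Y y g ∧ ∀ T, g (D T y) = f (T x)

theorem nrad_map (D : (X →L[𝕜] X) ≃ₗᵢ[𝕜] (Y →L[𝕜] Y)) (hD : PairsStates D)
    (hD' : PairsStates D.symm) (T : X →L[𝕜] X) : nrad 𝕜 Y (D T) = nrad 𝕜 X T := by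
  unfold nrad
  congr 1
  ext r
  constructor
  · rintro ⟨y, g, hyg, rfl⟩
    obtain ⟨x, f, hxf, hpair⟩ := hD' y g hyg
    exact ⟨x, f, hxf, by rw [← hpair, D.symm_apply_apply]⟩
  · rintro ⟨x, f, hxf, rfl⟩
    obtain ⟨y, g, hyg, hpair⟩ := hD x f hxf
    exact ⟨y, g, hyg, by rw [hpair]⟩

theorem LppNu.map (D : (X →L[𝕜] X) ≃ₗᵢ[𝕜] (Y →L[𝕜] Y)) (hD : PairsStates D)
    (hD' : PairsStates D.symm) (hX : LppNu 𝕜 X) : LppNu 𝕜 Y := by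
  intro ε hε y g hyg
  obtain ⟨x, f, hxf, hpair⟩ := hD' y g hyg
  obtain ⟨η, hη, hXη⟩ := hX ε hε x f hxf
  refine ⟨η, hη, fun T' hT' hlarge => ?_⟩
  obtain ⟨S, hS, hSx, hST⟩ := hXη (D.symm T')
    (by rw [← nrad_map D hD hD', D.apply_symm_apply, hT'])
    (by rwa [hpair])
  refine ⟨D S, by rw [nrad_map D hD hD', hS], by rwa [← hpair, D.symm_apply_apply], ?_⟩
  rwa [← D.apply_symm_apply T', ← map_sub, D.norm_map]

end Transfer

theorem IsState.inclusionInDoubleDual {x : X} {f : StrongDual 𝕜 X} (h : IsState 𝕜 X x f) :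
    IsState 𝕜 (StrongDual 𝕜 X) f (inclusionInDoubleDual 𝕜 X x) :=
  ⟨h.2.1, ((inclusionInDoubleDualLi 𝕜).norm_map x).trans h.1, h.2.2⟩

theorem pairsStates_dualMapEquiv (hrefl : Function.Surjective ⇑(inclusionInDoubleDual 𝕜 X)) :
    PairsStates (ContinuousLinearMap.dualMapEquiv hrefl : (X →L[𝕜] X) ≃ₗᵢ[𝕜] _) :=
  fun x f hxf => ⟨f, inclusionInDoubleDual 𝕜 X x, hxf.inclusionInDoubleDual, fun T => by simp⟩

theorem pairsStates_dualMapEquiv_symm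
    (hrefl : Function.Surjective ⇑(inclusionInDoubleDual 𝕜 X)) :
    PairsStates (ContinuousLinearMap.dualMapEquiv hrefl : (X →L[𝕜] X) ≃ₗᵢ[𝕜] _).symm := by
  intro g Φ hgΦ
  obtain ⟨x, rfl⟩ := hrefl Φ
  refine ⟨x, g, ⟨?_, hgΦ.1, hgΦ.2.2⟩, fun T' => ?_⟩
  · exact ((inclusionInDoubleDualLi 𝕜).norm_map x).symm.trans hgΦ.2.1
  · exact (ContinuousLinearMap.dualMapEquiv_apply_apply hrefl _ g x).symm.trans
      (congrArg (· g x) ((ContinuousLinearMap.dualMapEquiv hrefl).apply_symm_apply T'))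

theorem stmt13
    (hrefl : Function.Surjective ⇑(NormedSpace.inclusionInDoubleDual 𝕜 X)) :
    LppNu 𝕜 X ↔ LppNu 𝕜 (StrongDual 𝕜 X) := by
  let D : (X →L[𝕜] X) ≃ₗᵢ[𝕜] _ := ContinuousLinearMap.dualMapEquiv hrefl
  have hD : PairsStates D := pairsStates_dualMapEquiv 𝕜 X hrefl
  have hD' : PairsStates D.symm := pairsStates_dualMapEquiv_symm 𝕜 X hrefl
  exact ⟨LppNu.map D hD hD', LppNu.map D.symm hD' (by simpa using hD)⟩
end
end

section
/- The norm of the space Z = c₀ renormed by ‖x‖_Z = ‖x‖_∞ + (Σᵢ |x(i)|²/2ⁱ)^{1/2} is strongly subdifferentiable at every point of its unit sphere. -/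
noncomputable section

open Filter Topology

/-- The norm `‖x‖_Z = ‖x‖_∞ + (Σ_{i=1}^∞ |x(i)|²/2ⁱ)^{1/2}` on the space `Z` of null
sequences (sequences indexed by `ℕ` starting at `0`, with weight `2^(i+1)`). -/
def Znorm (x : ℕ → ℝ) : ℝ :=
  (⨆ i, |x i|) + Real.sqrt (∑' i, (x i) ^ 2 / 2 ^ (i + 1))

private lemma wdiv_eq (a : ℝ) (i : ℕ) : a / 2 ^ (i + 1) = a / 2 / 2 ^ i := by
  rw [pow_succ, div_div]; ring_nf

private lemma summable_w (a : ℝ) : Summable fun i : ℕ => a / 2 ^ (i + 1) := by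
  simpa [wdiv_eq] using summable_geometric_two' a

private lemma tsum_w (a : ℝ) : ∑' i : ℕ, a / 2 ^ (i + 1) = a := by
  simpa [wdiv_eq] using tsum_geometric_two' a

private lemma bdd_abs_range {x : ℕ → ℝ} (hx : Tendsto x atTop (𝓝 0)) :
    BddAbove (Set.range fun i => |x i|) := by
  have h := hx.abs
  rw [abs_zero] at h
  exact h.bddAbove_range

private lemma summable_wdiv {x : ℕ → ℝ} {C : ℝ} (hC : ∀ i, |x i| ≤ C) :
    Summable fun i => x i / 2 ^ (i + 1) := by
  refine Summable.of_abs (Summable.of_nonneg_of_le (fun i => abs_nonneg _)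
    (fun i => ?_) (summable_w C))
  rw [abs_div, abs_of_nonneg (by positivity : (0:ℝ) ≤ (2:ℝ) ^ (i+1))]
  exact div_le_div_of_nonneg_right (hC i) (by positivity) |>.trans_eq rfl

private lemma tsum_wdiv_le {x : ℕ → ℝ} {C : ℝ} (hC : ∀ i, |x i| ≤ C) :
    |∑' i, x i / 2 ^ (i + 1)| ≤ C := by
  have hs := summable_wdiv hC
  have hsa : Summable fun i => |x i| / 2 ^ (i + 1) :=
    summable_wdiv (fun i => by rw [abs_abs]; exact hC i)
  have h1 : |∑' i, x i / 2 ^ (i + 1)| ≤ ∑' i, |x i| / 2 ^ (i + 1) := by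
    have := norm_tsum_le_tsum_norm (f := fun i => x i / 2 ^ (i + 1))
      (by simpa [abs_div, abs_of_nonneg] using hsa)
    simpa [abs_div, abs_of_nonneg] using this
  have h2 : ∑' i, |x i| / 2 ^ (i + 1) ≤ ∑' i, C / 2 ^ (i + 1) := by
    refine Summable.tsum_le_tsum (fun i => ?_) hsa (summable_w C)
    exact div_le_div_of_nonneg_right (hC i) (by positivity) |>.trans_eq rfl
  calc |∑' i, x i / 2 ^ (i + 1)| ≤ ∑' i, C / 2 ^ (i + 1) := h1.trans h2
    _ = C := tsum_w C

private lemma abs_sign_le (x : ℝ) : |Real.sign x| ≤ 1 := by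
  rcases lt_trichotomy x 0 with h | h | h
  · simp [Real.sign_of_neg h]
  · simp [h, Real.sign_zero]
  · simp [Real.sign_of_pos h]

set_option maxHeartbeats 1000000 in
/-- the norm of `Z` is strongly subdifferentiable at every point of the unit
sphere: the one-sided derivative limit exists uniformly for `h` in the unit ball. -/
theorem stmt17 (z : ℕ → ℝ) (hz : Tendsto z atTop (𝓝 0)) (hzn : Znorm z = 1) :
    ∃ φ : (ℕ → ℝ) → ℝ, ∀ ε : ℝ, 0 < ε → ∃ δ : ℝ, 0 < δ ∧
      ∀ h : ℕ → ℝ, Tendsto h atTop (𝓝 0) → Znorm h ≤ 1 →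
        ∀ t : ℝ, 0 < t → t < δ →
          |(Znorm (fun i => z i + t * h i) - Znorm z) / t - φ h| < ε := by
  have hbz := bdd_abs_range hz
  set M := ⨆ i, |z i| with hMdef
  -- z is nonzero
  have hzne : ∃ i, z i ≠ 0 := by
    by_contra hc
    push_neg at hc
    have h0 : Znorm z = 0 := by simp [Znorm, hc]
    rw [hzn] at h0; norm_num at h0
  obtain ⟨i0, hi0⟩ := hzne
  have hle_M : ∀ i, |z i| ≤ M := fun i => le_ciSup hbz i
  have hMpos : 0 < M := lt_of_lt_of_le (abs_pos.2 hi0) (hle_M i0)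
  -- the quadratic part
  have hQz_summable : Summable (fun i => z i ^ 2 / 2 ^ (i + 1)) := by
    refine summable_wdiv (C := M ^ 2) fun i => ?_
    rw [abs_pow]
    exact pow_le_pow_left₀ (abs_nonneg _) (hle_M i) 2
  have hQz_pos : 0 < ∑' i, z i ^ 2 / 2 ^ (i + 1) :=
    Summable.tsum_pos hQz_summable (fun i => by positivity) i0 (by positivity)
  set q := Real.sqrt (∑' i, z i ^ 2 / 2 ^ (i + 1)) with hqdef
  have hqpos : 0 < q := Real.sqrt_pos.2 hQz_pos
  have hq2 : q ^ 2 = ∑' i, z i ^ 2 / 2 ^ (i + 1) := Real.sq_sqrt hQz_pos.le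
  have hMq : M + q = 1 := by rw [← hzn]; rfl
  have hM1 : M ≤ 1 := by linarith
  have hq1 : q ≤ 1 := by linarith
  -- eventual tail bound
  have hev : ∀ᶠ i in atTop, |z i| < M / 2 := by
    have h := hz.abs
    rw [abs_zero] at h
    exact h.eventually_lt_const (by positivity)
  obtain ⟨N, hN⟩ := eventually_atTop.1 hev
  -- the (finite, nonempty) set of indices attaining the sup
  set T : Finset ℕ := Finset.range (N + 1) with hTdef
  have hT : T.Nonempty := ⟨0, by simp [hTdef]⟩
  obtain ⟨j, hjT, hjmax⟩ := T.exists_max_image (fun i => |z i|) hT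
  have hjM : |z j| = M := by
    refine le_antisymm (hle_M j) ?_
    have hMle : M ≤ max (|z j|) (M / 2) := by
      refine ciSup_le fun i => ?_
      by_cases hi : i ∈ T
      · exact le_max_of_le_left (hjmax i hi)
      · have hNi : N ≤ i := by
          simp only [hTdef, Finset.mem_range, not_lt] at hi; omega
        exact le_max_of_le_right (hN i hNi).le
    rcases le_max_iff.1 hMle with h | h
    · exact h
    · linarith
  set F : Finset ℕ := T.filter (fun i => |z i| = M) with hFdef
  have hFne : F.Nonempty := ⟨j, Finset.mem_filter.2 ⟨hjT, hjM⟩⟩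
  have hFmem : ∀ i ∈ F, |z i| = M := fun i hi => (Finset.mem_filter.1 hi).2
  have hFz : ∀ i ∈ F, z i ≠ 0 := by
    intro i hi h0
    have := hFmem i hi
    rw [h0, abs_zero] at this
    linarith
  -- the gap η
  have hgap : ∃ η : ℝ, 0 < η ∧ η ≤ M / 2 ∧ ∀ i, i ∉ F → |z i| ≤ M - η := by
    classical
    let E : Finset ℝ := insert (M / 2) ((T \ F).image fun i => M - |z i|)
    have hEne : E.Nonempty := ⟨M / 2, Finset.mem_insert_self _ _⟩
    refine ⟨E.min' hEne, ?_, Finset.min'_le _ _ (Finset.mem_insert_self _ _), ?_⟩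
    · have hm := E.min'_mem hEne
      rcases Finset.mem_insert.1 hm with h | h
      · rw [h]; positivity
      · obtain ⟨i, hiG, hieq⟩ := Finset.mem_image.1 h
        have hiF : i ∉ F := (Finset.mem_sdiff.1 hiG).2
        have hne : |z i| ≠ M := fun hc =>
          hiF (Finset.mem_filter.2 ⟨(Finset.mem_sdiff.1 hiG).1, hc⟩)
        have h2 : |z i| < M := lt_of_le_of_ne (hle_M i) hne
        rw [← hieq]
        linarith
    · intro i hi
      by_cases hiT : i ∈ T
      · have hmem : M - |z i| ∈ E :=
          Finset.mem_insert_of_mem (Finset.mem_image.2 ⟨i, Finset.mem_sdiff.2 ⟨hiT, hi⟩, rfl⟩)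
        have := Finset.min'_le E _ hmem
        linarith
      · have hNi : N ≤ i := by
          simp only [hTdef, Finset.mem_range, not_lt] at hiT; omega
        have h2 := hN i hNi
        have h3 := Finset.min'_le E _ (Finset.mem_insert_self (M / 2) _)
        linarith
  obtain ⟨η, hηpos, hη2, hηG⟩ := hgap
  -- the subdifferential
  refine ⟨fun h => F.sup' hFne (fun i => Real.sign (z i) * h i)
      + (∑' i, z i * h i / 2 ^ (i + 1)) / q, ?_⟩
  intro ε hε
  set K := 2 * (1 + 1 / q ^ 2) / q with hKdef
  have hKpos : 0 < K := by positivity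
  refine ⟨min (η / 2) (min (q ^ 2 / 2) (ε / K)), by positivity, ?_⟩
  intro h hh hhn t ht htδ
  have hbh := bdd_abs_range hh
  have hh1 : ∀ i, |h i| ≤ 1 := by
    intro i
    have h1 : |h i| ≤ ⨆ j, |h j| := le_ciSup hbh i
    have h2 : (⨆ j, |h j|) ≤ Znorm h := le_add_of_nonneg_right (Real.sqrt_nonneg _)
    linarith
  set s := F.sup' hFne (fun i => Real.sign (z i) * h i) with hsdef
  have htη : t < η / 2 := lt_of_lt_of_le htδ (min_le_left _ _)
  have htq : t < q ^ 2 / 2 := lt_of_lt_of_le htδ ((min_le_right _ _).trans (min_le_left _ _))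
  have htε : t < ε / K := lt_of_lt_of_le htδ ((min_le_right _ _).trans (min_le_right _ _))
  have htM : t < M := by linarith
  -- key pointwise identity on F
  have key : ∀ i ∈ F, |z i + t * h i| = M + t * (Real.sign (z i) * h i) := by
    intro i hiF
    have hzi := hFmem i hiF
    have hzi0 := hFz i hiF
    have hhib := abs_le.1 (hh1 i)
    rcases hzi0.lt_or_gt with hneg | hpos
    · have hsgn : Real.sign (z i) = -1 := Real.sign_of_neg hneg
      have hzM : z i = -M := by
        have h2 := abs_of_neg hneg
        rw [h2] at hzi
        linarith
      rw [hsgn, hzM]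
      have he : -M + t * h i = -(M - t * h i) := by ring
      rw [he, abs_neg, abs_of_pos (by nlinarith)]
      ring
    · have hsgn : Real.sign (z i) = 1 := Real.sign_of_pos hpos
      have hzM : z i = M := by rw [← hzi, abs_of_pos hpos]
      rw [hsgn, hzM, abs_of_pos (by nlinarith)]
      ring
  -- bounds on s
  have hs_le : s ≤ 1 := by
    refine Finset.sup'_le hFne _ fun i hi => ?_
    have hsi : Real.sign (z i) * h i ≤ |Real.sign (z i) * h i| := le_abs_self _
    rw [abs_mul] at hsi
    nlinarith [abs_sign_le (z i), abs_nonneg (Real.sign (z i)), abs_nonneg (h i), hh1 i]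
  have hs_ge : -1 ≤ s := by
    have hle : Real.sign (z j) * h j ≤ F.sup' hFne (fun i => Real.sign (z i) * h i) :=
      Finset.le_sup' (fun i => Real.sign (z i) * h i) (Finset.mem_filter.2 ⟨hjT, hjM⟩)
    rw [← hsdef] at hle
    have h1 : -|Real.sign (z j) * h j| ≤ Real.sign (z j) * h j := neg_abs_le _
    rw [abs_mul] at h1
    nlinarith [abs_sign_le (z j), abs_nonneg (Real.sign (z j)), abs_nonneg (h j), hh1 j]
  -- sup-norm part
  have hzth : Tendsto (fun i => z i + t * h i) atTop (𝓝 0) := by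
    have := hz.add (hh.const_mul t)
    simpa using this
  have hsup_eq : (⨆ i, |z i + t * h i|) = M + t * s := by
    refine le_antisymm (ciSup_le fun i => ?_) ?_
    · by_cases hiF : i ∈ F
      · rw [key i hiF]
        have hle2 : Real.sign (z i) * h i ≤ F.sup' hFne (fun i => Real.sign (z i) * h i) :=
          Finset.le_sup' (fun i => Real.sign (z i) * h i) hiF
        rw [← hsdef] at hle2
        nlinarith
      · have h1 : |z i + t * h i| ≤ |z i| + t * |h i| := by
          calc |z i + t * h i| ≤ |z i| + |t * h i| := abs_add_le _ _
            _ = |z i| + t * |h i| := by rw [abs_mul, abs_of_pos ht]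
        have h2 := hηG i hiF
        nlinarith [hh1 i]
    · obtain ⟨i1, hi1F, hi1⟩ := Finset.exists_mem_eq_sup' hFne (fun i => Real.sign (z i) * h i)
      have he : |z i1 + t * h i1| = M + t * s := by
        rw [key i1 hi1F, hsdef, hi1]
      rw [← he]
      exact le_ciSup (bdd_abs_range hzth) i1
  -- quadratic part
  have hSh : Summable (fun i => h i ^ 2 / 2 ^ (i + 1)) := by
    refine summable_wdiv (C := 1) fun i => ?_
    rw [abs_pow]
    nlinarith [hh1 i, abs_nonneg (h i)]
  have hSzh : Summable (fun i => z i * h i / 2 ^ (i + 1)) := by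
    refine summable_wdiv (C := M) fun i => ?_
    rw [abs_mul]
    nlinarith [hh1 i, abs_nonneg (z i), hle_M i, abs_nonneg (h i)]
  set B := ∑' i, z i * h i / 2 ^ (i + 1) with hBdef
  set c := ∑' i, h i ^ 2 / 2 ^ (i + 1) with hcdef
  have hB1 : |B| ≤ 1 := by
    refine le_trans (tsum_wdiv_le (C := M) fun i => ?_) hM1
    rw [abs_mul]
    nlinarith [hh1 i, abs_nonneg (z i), hle_M i, abs_nonneg (h i)]
  have hc0 : 0 ≤ c := tsum_nonneg fun i => by positivity
  have hc1 : c ≤ 1 := by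
    have hb := tsum_wdiv_le (x := fun i => h i ^ 2) (C := 1) fun i => by
      rw [abs_pow]; nlinarith [hh1 i, abs_nonneg (h i)]
    calc c ≤ |c| := le_abs_self _
      _ ≤ 1 := hb
  have hexp : ∑' i, (z i + t * h i) ^ 2 / 2 ^ (i + 1) = q ^ 2 + 2 * t * B + t ^ 2 * c := by
    rw [hq2, hBdef, hcdef]
    have step : ∀ i : ℕ, (z i + t * h i) ^ 2 / 2 ^ (i + 1)
        = z i ^ 2 / 2 ^ (i + 1) + ((2 * t) * (z i * h i / 2 ^ (i + 1))
          + (t ^ 2) * (h i ^ 2 / 2 ^ (i + 1))) := fun i => by ring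
    calc ∑' i, (z i + t * h i) ^ 2 / 2 ^ (i + 1)
        = ∑' i, (z i ^ 2 / 2 ^ (i + 1) + ((2 * t) * (z i * h i / 2 ^ (i + 1))
          + (t ^ 2) * (h i ^ 2 / 2 ^ (i + 1)))) := tsum_congr step
      _ = (∑' i, z i ^ 2 / 2 ^ (i + 1)) + ((∑' i, (2 * t) * (z i * h i / 2 ^ (i + 1)))
          + (∑' i, (t ^ 2) * (h i ^ 2 / 2 ^ (i + 1)))) := by
            rw [Summable.tsum_add hQz_summable ((hSzh.mul_left (2 * t)).add (hSh.mul_left (t ^ 2))),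
              Summable.tsum_add (hSzh.mul_left (2 * t)) (hSh.mul_left (t ^ 2))]
      _ = (∑' i, z i ^ 2 / 2 ^ (i + 1)) + 2 * t * (∑' i, z i * h i / 2 ^ (i + 1))
          + t ^ 2 * (∑' i, h i ^ 2 / 2 ^ (i + 1)) := by
            rw [tsum_mul_left, tsum_mul_left]; ring
  have hQth_nonneg : 0 ≤ q ^ 2 + 2 * t * B + t ^ 2 * c := by
    rw [← hexp]
    exact tsum_nonneg fun i => by positivity
  set D := Real.sqrt (q ^ 2 + 2 * t * B + t ^ 2 * c) with hDdef
  have hD2 : D ^ 2 = q ^ 2 + 2 * t * B + t ^ 2 * c := Real.sq_sqrt hQth_nonneg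
  have hD0 : 0 ≤ D := Real.sqrt_nonneg _
  set P := q + t * B / q with hPdef
  have hP : q / 2 ≤ P := by
    have hBb := abs_le.1 hB1
    have h1 : -(q / 2) ≤ t * B / q := by
      rw [neg_le, ← neg_div, div_le_iff₀ hqpos]
      nlinarith
    rw [hPdef]
    linarith
  have hDP : D - P = t ^ 2 * (c - B ^ 2 / q ^ 2) / (D + P) := by
    have hden : 0 < D + P := by
      have h0 : 0 < q / 2 := by positivity
      calc (0:ℝ) < q / 2 := h0
        _ ≤ P := hP
        _ ≤ D + P := le_add_of_nonneg_left hD0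
    have hsq : D ^ 2 - P ^ 2 = t ^ 2 * (c - B ^ 2 / q ^ 2) := by
      rw [hD2, hPdef]
      field_simp
      ring
    rw [eq_div_iff hden.ne', ← hsq]
    ring
  have hDPb : |D - P| ≤ t ^ 2 * K := by
    have hden : 0 < D + P := by
      have h0 : 0 < q / 2 := by positivity
      calc (0:ℝ) < q / 2 := h0
        _ ≤ P := hP
        _ ≤ D + P := le_add_of_nonneg_left hD0
    rw [hDP, abs_div, abs_of_pos hden, abs_mul, abs_of_nonneg (by positivity : (0:ℝ) ≤ t ^ 2)]
    have hnum : |c - B ^ 2 / q ^ 2| ≤ 1 + 1 / q ^ 2 := by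
      have h1 : |B ^ 2 / q ^ 2| ≤ 1 / q ^ 2 := by
        rw [abs_div, abs_of_pos (by positivity : (0:ℝ) < q ^ 2), abs_pow]
        have h2 : |B| ^ 2 ≤ 1 := by nlinarith [abs_nonneg B]
        exact div_le_div_of_nonneg_right h2 (by positivity) |>.trans_eq rfl
      have h3 : |c| ≤ 1 := abs_le.2 ⟨by linarith, hc1⟩
      calc |c - B ^ 2 / q ^ 2| ≤ |c| + |B ^ 2 / q ^ 2| := abs_sub _ _
        _ ≤ 1 + 1 / q ^ 2 := by linarith
    calc t ^ 2 * |c - B ^ 2 / q ^ 2| / (D + P)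
        ≤ t ^ 2 * (1 + 1 / q ^ 2) / (q / 2) := by
          refine div_le_div₀ (by positivity) ?_ (by positivity) (by linarith)
          nlinarith [sq_nonneg t]
      _ = t ^ 2 * K := by rw [hKdef]; field_simp
  -- put it together
  have hZth : Znorm (fun i => z i + t * h i) = (M + t * s) + D := by
    show (⨆ i, |z i + t * h i|) + Real.sqrt (∑' i, (z i + t * h i) ^ 2 / 2 ^ (i + 1))
        = (M + t * s) + D
    rw [hsup_eq, hexp, hDdef]
  show |(Znorm (fun i => z i + t * h i) - Znorm z) / t - (s + B / q)| < ε
  rw [hZth, hzn]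
  have heq : ((M + t * s) + D - 1) / t - (s + B / q) = (D - P) / t := by
    rw [← hMq, hPdef]
    field_simp
    ring
  rw [heq, abs_div, abs_of_pos ht]
  have hfin : |D - P| / t ≤ t * K := by
    rw [div_le_iff₀ ht]
    calc |D - P| ≤ t ^ 2 * K := hDPb
      _ = t * K * t := by ring
  calc |D - P| / t ≤ t * K := hfin
    _ < ε := (lt_div_iff₀ hKpos).1 htε
end
end
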